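/- Suppose the sequence (x^k, λ^k) is generated by P-ALM, i.e., x^{k+1} ∈ X minimizes x ↦ θ(x) − ⟨λ^k, Ax − b⟩ + (r/2)‖A(x − x^k)‖² + (1/2)⟨x − x^k, Q(x − x^k)⟩ over X and λ^{k+1} = λ^k − r(A(2x^{k+1} − x^k) − b). Then for every w* ∈ M*, the series ∑_{k=0}^{∞} ‖w^k − w^{k+1}‖²_H converges and ∑_{k=0}^{∞} ‖w^k − w^{k+1}‖²_H ≤ ‖w* − w^0‖²_H; consequently ‖w^k − w^{k+1}‖_H → 0 as k → ∞. -/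

import Mathlib

/-!
The `x`-subproblem is a convex minimisation whose first-order condition, combined with the
multiplier update, says that `w^{k+1}` solves the variational inequality of `M*` up to the
correction term `H (w^{k+1} − wᵏ)`. Testing it at `w*` and testing the inequality of `w*` at
`w^{k+1}`, the `θ`-terms cancel and `⟨w* − w^{k+1}, H (w^{k+1} − wᵏ)⟩ ≥ 0`. Hence
`‖w* − w^{k+1}‖²_H + ‖wᵏ − w^{k+1}‖²_H ≤ ‖w* − wᵏ‖²_H`, and the squared steps telescope.
-/

open Matrix Finset

noncomputable section

/-- The bilinear form `(w₁, w₂) ↦ ⟨w₁, H w₂⟩` of the P-ALM matrix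
`H = [[rAᵀA + Q, Aᵀ], [A, (1/r)I]]` on `ℝⁿ × ℝᵐ`. -/
def Hbil {n m : ℕ} (A : Matrix (Fin m) (Fin n) ℝ) (Q : Matrix (Fin n) (Fin n) ℝ) (r : ℝ)
    (w₁ w₂ : (Fin n → ℝ) × (Fin m → ℝ)) : ℝ :=
  w₁.1 ⬝ᵥ ((r • (Aᵀ * A) + Q) *ᵥ w₂.1) + w₁.1 ⬝ᵥ (Aᵀ *ᵥ w₂.2) + w₁.2 ⬝ᵥ (A *ᵥ w₂.1)
    + 1 / r * (w₁.2 ⬝ᵥ w₂.2)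

/-- The squared `H`-weighted norm `‖w‖²_H = ⟨w, Hw⟩`. -/
def HnormSq {n m : ℕ} (A : Matrix (Fin m) (Fin n) ℝ) (Q : Matrix (Fin n) (Fin n) ℝ) (r : ℝ)
    (w : (Fin n → ℝ) × (Fin m → ℝ)) : ℝ := Hbil A Q r w w

/-- The affine map `J(x, λ) = (−Aᵀλ, Ax − b)`. -/
def Jmap {n m : ℕ} (A : Matrix (Fin m) (Fin n) ℝ) (b : Fin m → ℝ)
    (w : (Fin n → ℝ) × (Fin m → ℝ)) : (Fin n → ℝ) × (Fin m → ℝ) :=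
  (-(Aᵀ *ᵥ w.2), A *ᵥ w.1 - b)

/-- The Euclidean inner product on `ℝⁿ × ℝᵐ`. -/
def pdot {n m : ℕ} (w₁ w₂ : (Fin n → ℝ) × (Fin m → ℝ)) : ℝ := w₁.1 ⬝ᵥ w₂.1 + w₁.2 ⬝ᵥ w₂.2

/-- `w* = (x*, λ*)` belongs to the solution set `M*` of `VI(θ, J, M)`, `M = X × ℝᵐ`:
`w*.1 ∈ X` and `θ(x) − θ(x*) + ⟨w − w*, J(w*)⟩ ≥ 0` for all `w ∈ M`. -/
def SolPoint {n m : ℕ} (θ : (Fin n → ℝ) → ℝ) (X : Set (Fin n → ℝ))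
    (A : Matrix (Fin m) (Fin n) ℝ) (b : Fin m → ℝ) (ws : (Fin n → ℝ) × (Fin m → ℝ)) : Prop :=
  ws.1 ∈ X ∧ ∀ w : (Fin n → ℝ) × (Fin m → ℝ), w.1 ∈ X →
    θ w.1 - θ ws.1 + pdot (w - ws) (Jmap A b ws) ≥ 0

/-- The P-ALM iteration: `x^{k+1} ∈ X` minimizes
`x ↦ θ(x) − ⟨λᵏ, Ax − b⟩ + (r/2)‖A(x − xᵏ)‖² + (1/2)⟨x − xᵏ, Q(x − xᵏ)⟩` over `X`, and
`λ^{k+1} = λᵏ − r(A(2x^{k+1} − xᵏ) − b)`. -/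
def PALM {n m : ℕ} (θ : (Fin n → ℝ) → ℝ) (X : Set (Fin n → ℝ))
    (A : Matrix (Fin m) (Fin n) ℝ) (b : Fin m → ℝ) (r : ℝ) (Q : Matrix (Fin n) (Fin n) ℝ)
    (x : ℕ → Fin n → ℝ) (lam : ℕ → Fin m → ℝ) : Prop :=
  (∀ k : ℕ, x (k + 1) ∈ X ∧ ∀ z ∈ X,
      θ (x (k + 1)) - lam k ⬝ᵥ (A *ᵥ x (k + 1) - b)
          + r / 2 * ((A *ᵥ (x (k + 1) - x k)) ⬝ᵥ (A *ᵥ (x (k + 1) - x k)))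
          + 1 / 2 * ((x (k + 1) - x k) ⬝ᵥ (Q *ᵥ (x (k + 1) - x k)))
        ≤ θ z - lam k ⬝ᵥ (A *ᵥ z - b)
          + r / 2 * ((A *ᵥ (z - x k)) ⬝ᵥ (A *ᵥ (z - x k)))
          + 1 / 2 * ((z - x k) ⬝ᵥ (Q *ᵥ (z - x k)))) ∧
  (∀ k : ℕ, lam (k + 1) = lam k - r • (A *ᵥ ((2 : ℝ) • x (k + 1) - x k) - b))

open Filter Topology

lemma nonneg_of_forall_mul_add_sq_mul_nonneg {a C : ℝ}
    (h : ∀ t : ℝ, 0 < t → t ≤ 1 → 0 ≤ t * a + t ^ 2 * C) : 0 ≤ a := by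
  have hlim : Tendsto (fun t : ℝ => a + t * C) (𝓝[>] 0) (𝓝 a) := by
    have hcont : Continuous fun t : ℝ => a + t * C := by fun_prop
    simpa using (hcont.tendsto 0).mono_left nhdsWithin_le_nhds
  refine ge_of_tendsto hlim ?_
  filter_upwards [Ioc_mem_nhdsGT one_pos] with t ⟨ht, ht1⟩
  have := h t ht ht1
  nlinarith

/-- Compare the minimiser `u` with `u + t • (z - u)` and let `t → 0⁺`. -/
lemma ConvexOn.le_add_slope_of_forall_le {E : Type*} [AddCommGroup E] [Module ℝ E]
    {X : Set E} {θ g : E → ℝ} (hθ : ConvexOn ℝ X θ) {u z : E} (hu : u ∈ X) (hz : z ∈ X)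
    (hmin : ∀ y ∈ X, θ u + g u ≤ θ y + g y) {D C : ℝ}
    (hg : ∀ t : ℝ, g (u + t • (z - u)) = g u + t * D + t ^ 2 * C) :
    0 ≤ θ z - θ u + D := by
  refine nonneg_of_forall_mul_add_sq_mul_nonneg (C := C) fun t ht ht1 => ?_
  have hseg : (1 - t) • u + t • z = u + t • (z - u) := by module
  have hmem : u + t • (z - u) ∈ X := hseg ▸ hθ.1 hu hz (by linarith) ht.le (by ring)
  have hconv : θ (u + t • (z - u)) ≤ (1 - t) * θ u + t * θ z := by
    simpa [hseg] using hθ.2 hu hz (by linarith : (0 : ℝ) ≤ 1 - t) ht.le (by ring)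
  have := hmin _ hmem
  rw [hg] at this
  nlinarith

section Matrices

variable {ι κ R : Type*} [Fintype ι] [Fintype κ] [CommSemiring R]

lemma dotProduct_transpose_mulVec' (A : Matrix κ ι R) (x : ι → R) (y : κ → R) :
    x ⬝ᵥ (Aᵀ *ᵥ y) = (A *ᵥ x) ⬝ᵥ y := by
  rw [dotProduct_mulVec, vecMul_transpose]

lemma dotProduct_transpose_mul_mulVec (A : Matrix κ ι R) (x y : ι → R) :
    x ⬝ᵥ ((Aᵀ * A) *ᵥ y) = (A *ᵥ x) ⬝ᵥ (A *ᵥ y) := by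
  rw [← mulVec_mulVec, dotProduct_transpose_mulVec']

lemma Matrix.IsSymm.dotProduct_mulVec_comm {Q : Matrix ι ι R} (hQ : Q.IsSymm) (u v : ι → R) :
    u ⬝ᵥ (Q *ᵥ v) = v ⬝ᵥ (Q *ᵥ u) := by
  rw [dotProduct_mulVec, ← mulVec_transpose, hQ.eq, dotProduct_comm]

end Matrices

section HNorm

variable {n m : ℕ} {A : Matrix (Fin m) (Fin n) ℝ} {Q : Matrix (Fin n) (Fin n) ℝ} {r : ℝ}

lemma Hbil_eq (v w : (Fin n → ℝ) × (Fin m → ℝ)) :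
    Hbil A Q r v w = r * ((A *ᵥ v.1) ⬝ᵥ (A *ᵥ w.1)) + v.1 ⬝ᵥ (Q *ᵥ w.1)
      + (A *ᵥ v.1) ⬝ᵥ w.2 + (A *ᵥ w.1) ⬝ᵥ v.2 + 1 / r * (v.2 ⬝ᵥ w.2) := by
  rw [Hbil, add_mulVec, smul_mulVec, dotProduct_add, dotProduct_smul,
    dotProduct_transpose_mul_mulVec, dotProduct_transpose_mulVec', dotProduct_comm v.2,
    smul_eq_mul]

lemma Hbil_comm (hQ : Q.IsSymm) (v w : (Fin n → ℝ) × (Fin m → ℝ)) :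
    Hbil A Q r v w = Hbil A Q r w v := by
  rw [Hbil_eq, Hbil_eq]
  linear_combination r * dotProduct_comm (A *ᵥ v.1) (A *ᵥ w.1)
    + hQ.dotProduct_mulVec_comm v.1 w.1 + 1 / r * dotProduct_comm v.2 w.2

lemma Hbil_add_left (u v w : (Fin n → ℝ) × (Fin m → ℝ)) :
    Hbil A Q r (u + v) w = Hbil A Q r u w + Hbil A Q r v w := by
  simp only [Hbil, Prod.fst_add, Prod.snd_add, add_dotProduct]
  ring

lemma Hbil_add_right (u v w : (Fin n → ℝ) × (Fin m → ℝ)) :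
    Hbil A Q r u (v + w) = Hbil A Q r u v + Hbil A Q r u w := by
  simp only [Hbil, Prod.fst_add, Prod.snd_add, mulVec_add, dotProduct_add]
  ring

lemma HnormSq_add (hQ : Q.IsSymm) (v w : (Fin n → ℝ) × (Fin m → ℝ)) :
    HnormSq A Q r (v + w) = HnormSq A Q r v + 2 * Hbil A Q r v w + HnormSq A Q r w := by
  simp only [HnormSq, Hbil_add_left, Hbil_add_right, Hbil_comm hQ w v]
  ring

lemma HnormSq_neg (w : (Fin n → ℝ) × (Fin m → ℝ)) : HnormSq A Q r (-w) = HnormSq A Q r w := by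
  simp only [HnormSq, Hbil, Prod.fst_neg, Prod.snd_neg, mulVec_neg, dotProduct_neg,
    neg_dotProduct, neg_neg]

lemma HnormSq_nonneg (hr : 0 < r) (hQ : Q.PosSemidef) (w : (Fin n → ℝ) × (Fin m → ℝ)) :
    0 ≤ HnormSq A Q r w := by
  set v := r • (A *ᵥ w.1) + w.2
  have hsq : HnormSq A Q r w = 1 / r * (v ⬝ᵥ v) + w.1 ⬝ᵥ (Q *ᵥ w.1) := by
    simp only [v, HnormSq, Hbil_eq, dotProduct_add, add_dotProduct, dotProduct_smul,
      smul_dotProduct, smul_eq_mul]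
    field_simp
    linear_combination r * dotProduct_comm (A *ᵥ w.1) w.2
  have hQw : 0 ≤ w.1 ⬝ᵥ (Q *ᵥ w.1) := by simpa using hQ.dotProduct_mulVec_nonneg w.1
  rw [hsq]
  have : 0 ≤ v ⬝ᵥ v := by simpa using dotProduct_self_star_nonneg v
  positivity

lemma HnormSq_add_HnormSq_le (hQ : Q.IsSymm) {ws w w' : (Fin n → ℝ) × (Fin m → ℝ)}
    (hangle : 0 ≤ Hbil A Q r (ws - w') (w' - w)) :
    HnormSq A Q r (ws - w') + HnormSq A Q r (w - w') ≤ HnormSq A Q r (ws - w) := by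
  have hws : ws - w = (ws - w') + (w' - w) := by abel
  rw [hws, HnormSq_add hQ, ← neg_sub w' w, HnormSq_neg]
  linarith

end HNorm

section PALMStep

variable {n m : ℕ} {A : Matrix (Fin m) (Fin n) ℝ} {Q : Matrix (Fin n) (Fin n) ℝ} {r : ℝ}
  {b : Fin m → ℝ} {lamk lam1 : Fin m → ℝ} {xk u : Fin n → ℝ}

lemma palm_x_update_vi {θ : (Fin n → ℝ) → ℝ} {X : Set (Fin n → ℝ)} (hθ : ConvexOn ℝ X θ)
    (hQ : Q.IsSymm) (hu : u ∈ X)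
    (hmin : ∀ z ∈ X,
      θ u - lamk ⬝ᵥ (A *ᵥ u - b)
          + r / 2 * ((A *ᵥ (u - xk)) ⬝ᵥ (A *ᵥ (u - xk)))
          + 1 / 2 * ((u - xk) ⬝ᵥ (Q *ᵥ (u - xk)))
        ≤ θ z - lamk ⬝ᵥ (A *ᵥ z - b)
          + r / 2 * ((A *ᵥ (z - xk)) ⬝ᵥ (A *ᵥ (z - xk)))
          + 1 / 2 * ((z - xk) ⬝ᵥ (Q *ᵥ (z - xk))))
    {z : Fin n → ℝ} (hz : z ∈ X) :
    0 ≤ θ z - θ u + (-(lamk ⬝ᵥ (A *ᵥ (z - u)))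
      + r * ((A *ᵥ (u - xk)) ⬝ᵥ (A *ᵥ (z - u))) + (z - u) ⬝ᵥ (Q *ᵥ (u - xk))) := by
  refine hθ.le_add_slope_of_forall_le (g := fun y => -(lamk ⬝ᵥ (A *ᵥ y - b))
      + r / 2 * ((A *ᵥ (y - xk)) ⬝ᵥ (A *ᵥ (y - xk))) + 1 / 2 * ((y - xk) ⬝ᵥ (Q *ᵥ (y - xk))))
    (C := r / 2 * ((A *ᵥ (z - u)) ⬝ᵥ (A *ᵥ (z - u))) + 1 / 2 * ((z - u) ⬝ᵥ (Q *ᵥ (z - u))))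
    hu hz (fun y hy => by linarith [hmin y hy]) fun t => ?_
  rw [show u + t • (z - u) - xk = (u - xk) + t • (z - u) by abel]
  generalize z - u = v
  generalize u - xk = p
  simp only [mulVec_add, mulVec_smul, dotProduct_add, add_dotProduct, dotProduct_sub,
    dotProduct_smul, smul_dotProduct, smul_eq_mul]
  linear_combination (t * r / 2) * dotProduct_comm (A *ᵥ v) (A *ᵥ p)
    + (t / 2) * hQ.dotProduct_mulVec_comm p v

/-- The multiplier update expresses `Ax* − b` through `x* − x^{k+1}`, `x^{k+1} − xᵏ` and
`λ^{k+1} − λᵏ`, after which the terms involving `λ*` cancel. -/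
lemma Hbil_sub_sub_eq_of_update (hr : r ≠ 0)
    (hupd : lam1 = lamk - r • (A *ᵥ ((2 : ℝ) • u - xk) - b))
    (ws : (Fin n → ℝ) × (Fin m → ℝ)) :
    Hbil A Q r (ws - (u, lam1)) ((u, lam1) - (xk, lamk))
      = (-(lamk ⬝ᵥ (A *ᵥ (ws.1 - u)))
          + r * ((A *ᵥ (u - xk)) ⬝ᵥ (A *ᵥ (ws.1 - u))) + (ws.1 - u) ⬝ᵥ (Q *ᵥ (u - xk)))
        + pdot ((u, lam1) - ws) (Jmap A b ws) := by
  have hb : A *ᵥ ws.1 - b = A *ᵥ (ws.1 - u) - A *ᵥ (u - xk) - (1 / r) • (lam1 - lamk) := by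
    rw [hupd, sub_sub_cancel_left, smul_neg, smul_smul, one_div, inv_mul_cancel₀ hr, one_smul]
    simp only [mulVec_sub, mulVec_smul]
    module
  rw [Hbil_eq]
  simp only [pdot, Jmap, Prod.fst_sub, Prod.snd_sub]
  rw [hb, ← neg_sub ws.1 u]
  generalize ws.1 - u = d
  generalize u - xk = e
  simp only [mulVec_neg, dotProduct_neg, neg_dotProduct, neg_neg, dotProduct_transpose_mulVec',
    dotProduct_sub, sub_dotProduct, dotProduct_smul, smul_eq_mul]
  linear_combination r * dotProduct_comm (A *ᵥ d) (A *ᵥ e)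
    + dotProduct_comm (A *ᵥ d) lam1 - dotProduct_comm (A *ᵥ d) lamk
    - dotProduct_comm (A *ᵥ d) ws.2
    - dotProduct_comm (A *ᵥ e) lam1 + dotProduct_comm (A *ᵥ e) ws.2

end PALMStep

lemma summable_and_tsum_le_of_add_le {f d : ℕ → ℝ} (hf : ∀ k, 0 ≤ f k) (hd : ∀ k, 0 ≤ d k)
    (hstep : ∀ k, d (k + 1) + f k ≤ d k) : Summable f ∧ ∑' k, f k ≤ d 0 := by
  have htel : ∀ N, ∑ k ∈ range N, f k + d N ≤ d 0 := by
    intro N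
    induction N with
    | zero => simp
    | succ N ih => rw [sum_range_succ]; linarith [hstep N]
  have hpartial : ∀ N, ∑ k ∈ range N, f k ≤ d 0 := fun N => by linarith [htel N, hd N]
  exact ⟨summable_of_sum_range_le hf hpartial, Real.tsum_le_of_sum_range_le hf hpartial⟩

theorem stmt_8_general (n m : ℕ) (θ : (Fin n → ℝ) → ℝ) (hθ : ConvexOn ℝ Set.univ θ)
    (X : Set (Fin n → ℝ)) (hXconvex : Convex ℝ X)
    (A : Matrix (Fin m) (Fin n) ℝ) (b : Fin m → ℝ) (r : ℝ) (hr : 0 < r)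
    (Q : Matrix (Fin n) (Fin n) ℝ) (hQ : Q.PosDef)
    (x : ℕ → Fin n → ℝ) (lam : ℕ → Fin m → ℝ) (halg : PALM θ X A b r Q x lam) :
    ∀ ws : (Fin n → ℝ) × (Fin m → ℝ), SolPoint θ X A b ws →
      Summable (fun k : ℕ => HnormSq A Q r ((x k, lam k) - (x (k + 1), lam (k + 1)))) ∧
      (∑' k : ℕ, HnormSq A Q r ((x k, lam k) - (x (k + 1), lam (k + 1)))) ≤
        HnormSq A Q r (ws - (x 0, lam 0)) ∧
      Filter.Tendsto
        (fun k : ℕ => Real.sqrt (HnormSq A Q r ((x k, lam k) - (x (k + 1), lam (k + 1)))))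
        Filter.atTop (nhds 0) := by
  intro ws hws
  have hQsymm : Q.IsSymm := isHermitian_iff_isSymm.mp hQ.isHermitian
  have hθX : ConvexOn ℝ X θ := hθ.subset (Set.subset_univ X) hXconvex
  have hstep : ∀ k, HnormSq A Q r (ws - (x (k + 1), lam (k + 1)))
      + HnormSq A Q r ((x k, lam k) - (x (k + 1), lam (k + 1)))
      ≤ HnormSq A Q r (ws - (x k, lam k)) := fun k => by
    refine HnormSq_add_HnormSq_le hQsymm ?_
    rw [Hbil_sub_sub_eq_of_update hr.ne' (halg.2 k)]
    have hvi := palm_x_update_vi hθX hQsymm (halg.1 k).1 (halg.1 k).2 hws.1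
    have hsol := hws.2 (x (k + 1), lam (k + 1)) (halg.1 k).1
    dsimp only at hsol
    linarith
  obtain ⟨hsum, hle⟩ := summable_and_tsum_le_of_add_le
    (f := fun k => HnormSq A Q r ((x k, lam k) - (x (k + 1), lam (k + 1))))
    (d := fun k => HnormSq A Q r (ws - (x k, lam k)))
    (fun _ => HnormSq_nonneg hr hQ.posSemidef _) (fun _ => HnormSq_nonneg hr hQ.posSemidef _)
    hstep
  refine ⟨hsum, hle, ?_⟩
  simpa using hsum.tendsto_atTop_zero.sqrt

/-- Summability of the successive differences in `H`-norm:
`∑ₖ ‖wᵏ − w^{k+1}‖²_H ≤ ‖w* − w⁰‖²_H`, hence `‖wᵏ − w^{k+1}‖_H → 0`. -/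
theorem stmt_8 (n m : ℕ) (θ : (Fin n → ℝ) → ℝ) (hθ : ConvexOn ℝ Set.univ θ)
    (X : Set (Fin n → ℝ)) (hXne : X.Nonempty) (hXclosed : IsClosed X) (hXconvex : Convex ℝ X)
    (A : Matrix (Fin m) (Fin n) ℝ) (b : Fin m → ℝ) (r : ℝ) (hr : 0 < r)
    (Q : Matrix (Fin n) (Fin n) ℝ) (hQ : Q.PosDef)
    (x : ℕ → Fin n → ℝ) (lam : ℕ → Fin m → ℝ) (halg : PALM θ X A b r Q x lam) :
    ∀ ws : (Fin n → ℝ) × (Fin m → ℝ), SolPoint θ X A b ws →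
      Summable (fun k : ℕ => HnormSq A Q r ((x k, lam k) - (x (k + 1), lam (k + 1)))) ∧
      (∑' k : ℕ, HnormSq A Q r ((x k, lam k) - (x (k + 1), lam (k + 1)))) ≤
        HnormSq A Q r (ws - (x 0, lam 0)) ∧
      Filter.Tendsto
        (fun k : ℕ => Real.sqrt (HnormSq A Q r ((x k, lam k) - (x (k + 1), lam (k + 1)))))
        Filter.atTop (nhds 0) :=
  stmt_8_general n m θ hθ X hXconvex A b r hr Q hQ x lam halg
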